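/- arXiv:2509.07786 — 4 statements merged into one kernel-verified Lean document; each statement's English description precedes it below -/
import Mathlib

section
/- Let n ≥ 1 and let s : ℝⁿ → ℝ satisfy the local log-Hölder condition with constant c_s > 0, i.e. |s(x) − s(y)| ≤ c_s/log(e + 1/|x − y|) for all x ≠ y in ℝⁿ. Then there exists a constant C > 0, depending only on c_s, such that for all integers j, l ≥ 0 and all x, y ∈ ℝⁿ with |x − y| ≤ 2^{l−j}, one has 2^{j·s(y)} ≤ C · 2^{l·c_s} · 2^{j·s(x)}. -/
open MeasureTheory
open scoped ENNReal NNReal ComplexOrder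

noncomputable section

namespace VarBesov

/-- `ℝⁿ` with the Euclidean norm. -/
abbrev Rn (n : ℕ) := EuclideanSpace ℝ (Fin n)

/-- Local log-Hölder condition with constant `c`. -/
def LocLH {n : ℕ} (c : ℝ) (r : Rn n → ℝ) : Prop :=
  ∀ x y : Rn n, x ≠ y → |r x - r y| ≤ c / Real.log (Real.exp 1 + 1 / dist x y)

/-- Global log-Hölder continuity. -/
def GlobLH {n : ℕ} (r : Rn n → ℝ) : Prop :=
  (∃ c > 0, LocLH c r) ∧
    ∃ rinf : ℝ, ∃ cinf > 0, ∀ x : Rn n, |r x - rinf| ≤ cinf / Real.log (Real.exp 1 + ‖x‖)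

/-- A variable exponent: measurable, pointwise positive, with positive essential
infimum and finite essential supremum. -/
def IsVarExp {n : ℕ} (p : Rn n → ℝ) : Prop :=
  Measurable p ∧ (∀ x, 0 < p x) ∧ 0 < essInf p volume ∧
    Filter.IsBoundedUnder (· ≤ ·) (ae volume) p

/-- The Luxemburg (quasi-)norm of `f` in the variable Lebesgue space `L^{p(·)}`,
valued in `ℝ≥0∞` (it is `∞` iff no admissible `λ` exists). -/
def luxNorm {n : ℕ} (p : Rn n → ℝ) (f : Rn n → ℝ) : ℝ≥0∞ :=
  sInf {lam : ℝ≥0∞ | ∫⁻ x, (ENNReal.ofReal |f x| / lam) ^ p x ≤ 1}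

/-- The mixed Lebesgue-sequence norm `‖{f_j}‖_{ℓ^{q(·)}(L^{p(·)})}`. -/
def mixedNorm {n : ℕ} (p q : Rn n → ℝ) (f : ℕ → Rn n → ℝ) : ℝ≥0∞ :=
  sInf {mu : ℝ≥0∞ |
    ∑' j : ℕ, luxNorm (fun x => p x / q x)
      (fun x => ((ENNReal.ofReal |f j x| / mu) ^ q x).toReal) ≤ 1}

/-- The axis-parallel (half-open) cube with lower corner `a` and side length `h`. -/
def cube {n : ℕ} (a : Rn n) (h : ℝ) : Set (Rn n) := {x | ∀ i, a i ≤ x i ∧ x i < a i + h}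

/-- The dilate `λQ` of the cube with corner `a` and side `h`, concentric with it. -/
def cubeDil {n : ℕ} (a : Rn n) (h lam : ℝ) : Set (Rn n) :=
  cube ((EuclideanSpace.equiv (Fin n) ℝ).symm fun i => a i - (lam - 1) * h / 2) (lam * h)

/-- Index of a dyadic cube `Q_{j,k} = 2^{-j}([0,1)ⁿ + k)` in `𝒬_+`. -/
abbrev DIdx (n : ℕ) := ℕ × (Fin n → ℤ)

/-- Side length of the dyadic cube. -/
def dSide {n : ℕ} (J : DIdx n) : ℝ := (2 : ℝ) ^ (-(J.1 : ℤ))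

/-- Lower corner of the dyadic cube. -/
def dCorner {n : ℕ} (J : DIdx n) : Rn n :=
  (EuclideanSpace.equiv (Fin n) ℝ).symm fun i => dSide J * (J.2 i : ℝ)

/-- The dyadic cube as a set. -/
def dCube {n : ℕ} (J : DIdx n) : Set (Rn n) := cube (dCorner J) (dSide J)

/-- Center of the dyadic cube. -/
def dCenter {n : ℕ} (J : DIdx n) : Rn n :=
  (EuclideanSpace.equiv (Fin n) ℝ).symm fun i => dSide J * ((J.2 i : ℝ) + 1 / 2)

/-- The index `k` such that `x ∈ Q_{j,k}`. -/
def cubeOf {n : ℕ} (j : ℕ) (x : Rn n) : Fin n → ℤ := fun i => ⌊(2 : ℝ) ^ (j : ℕ) * x i⌋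

/-- Euclidean norm of a vector in `ℂ^m`. -/
def evnorm {m : ℕ} (v : Fin m → ℂ) : ℝ := Real.sqrt (∑ i, ‖v i‖ ^ 2)

/-- Operator norm of an `m × m` complex matrix with respect to the Euclidean norm. -/
def opNorm {m : ℕ} (A : Matrix (Fin m) (Fin m) ℂ) : ℝ :=
  ⨆ z : {z : Fin m → ℂ // evnorm z ≤ 1}, evnorm (A.mulVec z.1)

/-- A matrix weight: measurable entries, a.e. positive definite (hence Hermitian)
values, locally integrable entries. -/
def IsMatrixWeight {n m : ℕ} (W : Rn n → Matrix (Fin m) (Fin m) ℂ) : Prop :=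
  (∀ i j, Measurable fun x => W x i j) ∧
  (∀ᵐ x ∂(volume : Measure (Rn n)), (W x).PosDef) ∧
  (∀ i j, LocallyIntegrable (fun x => W x i j) volume)

/-- The quantity `(1/|S|) ∫_S log( ‖ ‖W(·)W⁻¹(y)‖ 1_T ‖_{L^{p(·)}} / ‖1_T‖_{L^{p(·)}} ) dy`. -/
def apIntegrand {n m : ℕ} (p : Rn n → ℝ) (W : Rn n → Matrix (Fin m) (Fin m) ℂ)
    (S T : Set (Rn n)) : ℝ :=
  (volume S).toReal⁻¹ *
    ∫ y in S, Real.log ((luxNorm p (T.indicator fun x => opNorm (W x * (W y)⁻¹)) /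
      luxNorm p (T.indicator fun _ => 1)).toReal)

/-- Matrix `𝒜_{p(·),∞}` weight. -/
def IsApInfty {n m : ℕ} (p : Rn n → ℝ) (W : Rn n → Matrix (Fin m) (Fin m) ℂ) : Prop :=
  IsMatrixWeight W ∧ ∃ C : ℝ, ∀ (a : Rn n) (h : ℝ), 0 < h →
    Real.exp (apIntegrand p W (cube a h) (cube a h)) ≤ C

/-- `W` has `𝒜_{p(·),∞}`-upper dimension `d`. -/
def HasUpperDim {n m : ℕ} (p : Rn n → ℝ) (W : Rn n → Matrix (Fin m) (Fin m) ℂ)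
    (d : ℝ) : Prop :=
  0 ≤ d ∧ ∃ C : ℝ, ∀ (a : Rn n) (h lam : ℝ), 0 < h → 1 ≤ lam →
    Real.exp (apIntegrand p W (cube a h) (cubeDil a h lam)) ≤ C * lam ^ d

/-- `W` has `𝒜_{p(·),∞}`-lower dimension `d`. -/
def HasLowerDim {n m : ℕ} (p : Rn n → ℝ) (W : Rn n → Matrix (Fin m) (Fin m) ℂ)
    (d : ℝ) : Prop :=
  0 ≤ d ∧ ∃ C : ℝ, ∀ (a : Rn n) (h lam : ℝ), 0 < h → 1 ≤ lam →
    Real.exp (apIntegrand p W (cubeDil a h lam) (cube a h)) ≤ C * lam ^ d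

/-- `d^{upper}_{p(·),∞}(W)`: the infimum of all upper dimensions of `W`. -/
def dUpper {n m : ℕ} (p : Rn n → ℝ) (W : Rn n → Matrix (Fin m) (Fin m) ℂ) : ℝ :=
  sInf {d : ℝ | HasUpperDim p W d}

/-- `J(W) = n / min(1, p_−) + d^{upper}_{p(·),∞}(W)`. -/
def JW {n m : ℕ} (p : Rn n → ℝ) (W : Rn n → Matrix (Fin m) (Fin m) ℂ) : ℝ :=
  (n : ℝ) / min 1 (essInf p volume) + dUpper p W

/-- `{A_Q}` is a family of reducing operators of order `p(·)` for `W`,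
with comparison constants `c₁ ≤ c₂`. -/
def IsReducing {n m : ℕ} (p : Rn n → ℝ) (W : Rn n → Matrix (Fin m) (Fin m) ℂ)
    (A : DIdx n → Matrix (Fin m) (Fin m) ℂ) (c₁ c₂ : ℝ) : Prop :=
  0 < c₁ ∧ c₁ ≤ c₂ ∧ (∀ J, (A J).PosDef) ∧
    ∀ (J : DIdx n) (z : Fin m → ℂ),
      ENNReal.ofReal (c₁ * evnorm ((A J).mulVec z)) ≤
          luxNorm p ((dCube J).indicator fun x => evnorm ((W x).mulVec z)) /
            luxNorm p ((dCube J).indicator fun _ => 1) ∧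
      luxNorm p ((dCube J).indicator fun x => evnorm ((W x).mulVec z)) /
          luxNorm p ((dCube J).indicator fun _ => 1) ≤
        ENNReal.ofReal (c₂ * evnorm ((A J).mulVec z))

/-- `t_j(x) = Σ_{Q ∈ 𝒬_j} |Q|^{-1/2} 1_Q(x) t_Q` (only one term is nonzero). -/
def seqFun {n m : ℕ} (t : DIdx n → (Fin m → ℂ)) (j : ℕ) (x : Rn n) : Fin m → ℂ :=
  ((2 : ℝ) ^ (((j : ℝ) * n) / 2)) • t (j, cubeOf j x)

/-- Matrix-weighted variable Besov sequence norm `‖t‖_{b^{s(·)}_{p(·),q(·)}(W)}`. -/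
def besovNormW {n m : ℕ} (p q s : Rn n → ℝ) (W : Rn n → Matrix (Fin m) (Fin m) ℂ)
    (t : DIdx n → (Fin m → ℂ)) : ℝ≥0∞ :=
  mixedNorm p q fun j x => (2 : ℝ) ^ ((j : ℝ) * s x) * evnorm ((W x).mulVec (seqFun t j x))

/-- Averaging matrix-weighted variable Besov sequence norm `‖t‖_{b^{s(·)}_{p(·),q(·)}(𝔸)}`. -/
def besovNormA {n m : ℕ} (p q s : Rn n → ℝ) (A : DIdx n → Matrix (Fin m) (Fin m) ℂ)
    (t : DIdx n → (Fin m → ℂ)) : ℝ≥0∞ :=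
  mixedNorm p q fun j x => (2 : ℝ) ^ ((j : ℝ) * s x) *
    evnorm ((A (j, cubeOf j x)).mulVec (seqFun t j x))

/-- The standard almost-diagonal majorant `b^{DEF}_{Q,R}`. -/
def bDEF {n : ℕ} (D Eexp F : ℝ) (J K : DIdx n) : ℝ :=
  (1 + dist (dCenter J) (dCenter K) / max (dSide J) (dSide K)) ^ (-D) *
    (if dSide J ≤ dSide K then (dSide J / dSide K) ^ Eexp else (dSide K / dSide J) ^ F)

/-- `(D,E,F)`-almost diagonal infinite matrix. -/
def IsAlmostDiagonal {n : ℕ} (D Eexp F : ℝ) (b : DIdx n → DIdx n → ℂ) : Prop :=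
  ∃ C : ℝ, ∀ J K : DIdx n, ‖b J K‖ ≤ C * bDEF D Eexp F J K

/-- Partial derivative in the `i`-th coordinate direction. -/
def pderiv' {n : ℕ} (i : Fin n) (f : Rn n → ℝ) : Rn n → ℝ :=
  fun x => fderiv ℝ f x (EuclideanSpace.single i 1)

/-- Multi-index partial derivative `∂^γ f`. -/
def mderiv {n : ℕ} (γ : Fin n → ℕ) (f : Rn n → ℝ) : Rn n → ℝ :=
  ((List.ofFn fun i : Fin n => (pderiv' i)^[γ i]).foldr (· ∘ ·) id) f

/-- `⌊⌊N⌋⌋ = max {k ∈ ℤ : k < N}`. -/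
def lfloor (N : ℝ) : ℤ := ⌈N⌉ - 1

/-- `(u_K)_Q(x) = |Q|^{-1/2} (1 + |x − x_Q|/l(Q))^{-K}`. -/
def uKQ {n : ℕ} (K : ℝ) (J : DIdx n) (x : Rn n) : ℝ :=
  dSide J ^ (-(n : ℝ) / 2) * (1 + dist x (dCenter J) / dSide J) ^ (-K)

/-- A smooth `(K,L,M,N)`-molecule on the dyadic cube `J`. -/
structure IsMolecule {n : ℕ} (K L M N : ℝ) (J : DIdx n) (f : Rn n → ℝ) : Prop where
  smooth : ContDiff ℝ ((max (lfloor N) 0).toNat : ℕ) f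
  decay : ∀ x, |f x| ≤ uKQ K J x
  vanish : dSide J < 1 → ∀ γ : Fin n → ℕ, ((∑ i, γ i : ℕ) : ℝ) ≤ L →
    (∫ x, (∏ i, x i ^ γ i) * f x) = 0
  derivBound : ∀ γ : Fin n → ℕ, ((∑ i, γ i : ℕ) : ℝ) < N → ∀ x,
    |mderiv γ f x| ≤ dSide J ^ (-((∑ i, γ i : ℕ) : ℝ)) * uKQ M J x
  holder : ∀ γ : Fin n → ℕ, ((∑ i, γ i : ℕ) : ℤ) = lfloor N → ∀ x y,
    |mderiv γ f x - mderiv γ f y| ≤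
      dSide J ^ (-((∑ i, γ i : ℕ) : ℝ)) * (dist x y / dSide J) ^ (N - (lfloor N : ℝ)) *
        ⨆ z : {z : Rn n // ‖z‖ ≤ dist x y}, uKQ M J (x + z.1)

/-- Projection `ℝ^{n+1} → ℝⁿ` forgetting the last coordinate. -/
def projLast {n : ℕ} (x : Rn (n + 1)) : Rn n :=
  (EuclideanSpace.equiv (Fin n) ℝ).symm fun i => x i.castSucc

/-- An exponent on `ℝⁿ` lifted to `ℝ^{n+1}`, independent of the last coordinate. -/
def liftExp {n : ℕ} (p : Rn n → ℝ) : Rn (n + 1) → ℝ := fun x => p (projLast x)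

/-- The dyadic cube `Q(I,k) = I × [l(I)k, l(I)(k+1))` in `ℝ^{n+1}`. -/
def QIk {n : ℕ} (I : DIdx n) (k : ℤ) : DIdx (n + 1) := (I.1, Fin.snoc I.2 k)


theorem statement0 {n : ℕ} (hn : 1 ≤ n) (s : Rn n → ℝ) (cs : ℝ) (hcs : 0 < cs)
    (hs : LocLH cs s) :
    ∃ C > 0, ∀ (j l : ℕ) (x y : Rn n), dist x y ≤ (2 : ℝ) ^ ((l : ℤ) - (j : ℤ)) →
      (2 : ℝ) ^ ((j : ℝ) * s y) ≤ C * (2 : ℝ) ^ ((l : ℝ) * cs) * (2 : ℝ) ^ ((j : ℝ) * s x) := by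
  refine ⟨Real.exp cs, Real.exp_pos cs, ?_⟩
  intro j l x y hd
  have h2 : (0:ℝ) < 2 := two_pos
  have hlog2 : (0:ℝ) < Real.log 2 := Real.log_pos one_lt_two
  have hecs : Real.exp cs = Real.exp cs := rfl
  rw [Real.rpow_def_of_pos h2, Real.rpow_def_of_pos h2, Real.rpow_def_of_pos h2,
    ← Real.exp_add, ← Real.exp_add, Real.exp_le_exp]
  by_cases hxy : x = y
  · subst hxy
    have h1 : (0:ℝ) ≤ (l:ℝ) * cs := by positivity
    nlinarith [hlog2.le]
  · have hdpos : 0 < dist x y := dist_pos.mpr hxy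
    have h1d : (0:ℝ) < 1 / dist x y := by positivity
    set L := Real.log (Real.exp 1 + 1 / dist x y) with hLdef
    have hL1 : 1 ≤ L := by
      have h := Real.log_le_log (Real.exp_pos 1) (by linarith : Real.exp 1 ≤ Real.exp 1 + 1 / dist x y)
      rwa [Real.log_exp] at h
    have hL0 : (0:ℝ) < L := lt_of_lt_of_le one_pos hL1
    have hlh := hs x y hxy
    have hA : s y - s x ≤ cs / L := by
      have := (abs_sub_comm (s x) (s y)) ▸ hlh
      exact le_trans (le_abs_self _) this
    have hAcs : s y - s x ≤ cs := le_trans hA (div_le_self hcs.le hL1)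
    rcases le_or_gt (j:ℝ) (l:ℝ) with hjl | hlj
    · have t1 : Real.log 2 * (j:ℝ) * (s y - s x) ≤ Real.log 2 * (j:ℝ) * cs :=
        mul_le_mul_of_nonneg_left hAcs (by positivity)
      have t2 : Real.log 2 * (j:ℝ) * cs ≤ Real.log 2 * (l:ℝ) * cs :=
        mul_le_mul_of_nonneg_right (mul_le_mul_of_nonneg_left hjl hlog2.le) hcs.le
      nlinarith [t1, t2, hcs.le]
    · -- l < j
      have hjlN : l < j := by exact_mod_cast hlj
      have hdiff1 : (1:ℝ) ≤ (j:ℝ) - l := by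
        have : (l:ℝ) + 1 ≤ j := by exact_mod_cast hjlN
        linarith
      have hDpos : (0:ℝ) < ((j:ℝ) - l) * Real.log 2 := by nlinarith
      have hpow : (2:ℝ) ^ ((j:ℤ) - (l:ℤ)) ≤ 1 / dist x y := by
        have hz : (2:ℝ) ^ ((j:ℤ) - (l:ℤ)) = ((2:ℝ) ^ ((l:ℤ) - (j:ℤ)))⁻¹ := by
          rw [← zpow_neg]; ring_nf
        rw [hz, one_div]
        exact inv_anti₀ hdpos hd
      have hLge : ((j:ℝ) - l) * Real.log 2 ≤ L := by
        have hzp : (0:ℝ) < (2:ℝ) ^ ((j:ℤ) - (l:ℤ)) := zpow_pos h2 _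
        have h := Real.log_le_log hzp
          (by linarith [Real.exp_pos 1] : (2:ℝ) ^ ((j:ℤ) - (l:ℤ)) ≤ Real.exp 1 + 1 / dist x y)
        rw [Real.log_zpow] at h
        push_cast at h
        linarith
      have hA2 : s y - s x ≤ cs / (((j:ℝ) - l) * Real.log 2) :=
        le_trans hA (div_le_div_of_nonneg_left hcs.le hDpos hLge)
      have h2' : (s y - s x) * (((j:ℝ) - l) * Real.log 2) ≤ cs := (le_div_iff₀ hDpos).mp hA2
      have t3 : Real.log 2 * ((l:ℝ) * (s y - s x)) ≤ Real.log 2 * ((l:ℝ) * cs) :=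
        mul_le_mul_of_nonneg_left
          (mul_le_mul_of_nonneg_left hAcs (Nat.cast_nonneg l)) hlog2.le
      nlinarith [h2', t3]

end VarBesov
end
end

section
/- Let n ≥ 1 and let s : ℝⁿ → ℝ satisfy the local log-Hölder condition with constant c_s > 0, i.e. |s(x) − s(y)| ≤ c_s/log(e + 1/|x − y|) for all x ≠ y in ℝⁿ. Then there exists a constant C > 0, depending only on c_s, such that for all integers j, l ≥ 0, all x, y ∈ ℝⁿ with |x − y| ≤ 2^{l−j}, and every real δ with 2^{−j} ≤ δ ≤ 1 + 2^{−j}, one has δ^{s(y)} ≤ C · 2^{l·c_s} · δ^{s(x)}. -/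
open MeasureTheory
open scoped ENNReal NNReal ComplexOrder

noncomputable section

namespace VarBesov

theorem statement1 {n : ℕ} (hn : 1 ≤ n) (s : Rn n → ℝ) (cs : ℝ) (hcs : 0 < cs)
    (hs : LocLH cs s) :
    ∃ C > 0, ∀ (j l : ℕ) (x y : Rn n), dist x y ≤ (2 : ℝ) ^ ((l : ℤ) - (j : ℤ)) →
      ∀ δ : ℝ, (2 : ℝ) ^ (-(j : ℤ)) ≤ δ → δ ≤ 1 + (2 : ℝ) ^ (-(j : ℤ)) →
        δ ^ s y ≤ C * (2 : ℝ) ^ ((l : ℝ) * cs) * δ ^ s x := by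
  refine ⟨Real.exp cs, Real.exp_pos cs, ?_⟩
  intro j l x y hxy δ hδ1 hδ2
  have h2j : (0:ℝ) < (2:ℝ) ^ (-(j:ℤ)) := by positivity
  have hδpos : 0 < δ := lt_of_lt_of_le h2j hδ1
  have hpow1 : (1:ℝ) ≤ (2:ℝ) ^ ((l:ℝ) * cs) :=
    Real.one_le_rpow one_le_two (mul_nonneg (Nat.cast_nonneg l) hcs.le)
  have key : δ ^ (s y - s x) ≤ Real.exp cs * (2:ℝ) ^ ((l:ℝ) * cs) := by
    rcases eq_or_ne x y with rfl | hne
    · simp only [sub_self, Real.rpow_zero]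
      calc (1:ℝ) ≤ Real.exp cs := by
            have := Real.add_one_le_exp cs; linarith
        _ ≤ Real.exp cs * (2:ℝ) ^ ((l:ℝ) * cs) := by
            nlinarith [Real.exp_pos cs]
    · have hd : 0 < dist x y := dist_pos.mpr hne
      set L := Real.log (Real.exp 1 + 1 / dist x y) with hLdef
      have hL1 : 1 ≤ L := by
        have : Real.exp 1 ≤ Real.exp 1 + 1 / dist x y := le_add_of_nonneg_right (by positivity)
        calc (1:ℝ) = Real.log (Real.exp 1) := (Real.log_exp 1).symm
          _ ≤ L := Real.log_le_log (Real.exp_pos 1) this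
      have hLpos : 0 < L := lt_of_lt_of_le one_pos hL1
      have hL2 : ((j:ℝ) - (l:ℝ)) * Real.log 2 ≤ L := by
        have hinv : (2:ℝ) ^ ((j:ℤ) - (l:ℤ)) ≤ 1 / dist x y := by
          rw [le_div_iff₀ hd]
          calc (2:ℝ) ^ ((j:ℤ) - (l:ℤ)) * dist x y
              ≤ (2:ℝ) ^ ((j:ℤ) - (l:ℤ)) * (2:ℝ) ^ ((l:ℤ) - (j:ℤ)) :=
                mul_le_mul_of_nonneg_left hxy (by positivity)
            _ = 1 := by
                rw [← zpow_add₀ (by norm_num : (2:ℝ) ≠ 0)]; norm_num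
        have hle : (2:ℝ) ^ ((j:ℤ) - (l:ℤ)) ≤ Real.exp 1 + 1 / dist x y := by
          have : (0:ℝ) < Real.exp 1 := Real.exp_pos 1
          linarith
        calc ((j:ℝ) - (l:ℝ)) * Real.log 2
            = Real.log ((2:ℝ) ^ ((j:ℤ) - (l:ℤ))) := by
              rw [Real.log_zpow]; push_cast; ring
          _ ≤ L := Real.log_le_log (by positivity) hle
      have ht : |s y - s x| ≤ cs / L := by
        rw [abs_sub_comm]; exact hs x y hne
      have hlog2 : Real.log 2 ≤ 1 := by
        have := Real.log_le_sub_one_of_pos (by norm_num : (0:ℝ) < 2); linarith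
      have hlog2pos : 0 < Real.log 2 := Real.log_pos (by norm_num)
      have hlogδ : |Real.log δ| * (cs / L) ≤ cs + (l:ℝ) * cs * Real.log 2 := by
        rcases le_or_gt 1 δ with h1 | h1
        · have habs : |Real.log δ| ≤ 1 := by
            rw [abs_of_nonneg (Real.log_nonneg h1)]
            have : δ ≤ 2 := by
              have : (2:ℝ) ^ (-(j:ℤ)) ≤ 1 := by
                apply zpow_le_one_of_nonpos₀ one_le_two; simp
              linarith
            calc Real.log δ ≤ Real.log 2 := Real.log_le_log hδpos this
              _ ≤ 1 := hlog2
          have hcsL : cs / L ≤ cs := by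
            rw [div_le_iff₀ hLpos]; nlinarith
          have h0 : 0 ≤ cs / L := by positivity
          have hprod : |Real.log δ| * (cs / L) ≤ cs := by
            calc |Real.log δ| * (cs / L) ≤ 1 * cs :=
                mul_le_mul habs hcsL h0 zero_le_one
              _ = cs := one_mul cs
          nlinarith [mul_nonneg (mul_nonneg (Nat.cast_nonneg (α := ℝ) l) hcs.le)
            hlog2pos.le]
        · have habs : |Real.log δ| ≤ (j:ℝ) * Real.log 2 := by
            rw [abs_of_nonpos (Real.log_nonpos hδpos.le h1.le)]
            have : -((j:ℝ)) * Real.log 2 ≤ Real.log δ := by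
              calc -((j:ℝ)) * Real.log 2 = Real.log ((2:ℝ) ^ (-(j:ℤ))) := by
                    rw [Real.log_zpow]; push_cast; ring
                _ ≤ Real.log δ := Real.log_le_log h2j hδ1
            linarith
          have key2 : (j:ℝ) * Real.log 2 ≤ (1 + (l:ℝ) * Real.log 2) * L := by
            nlinarith [mul_nonneg (mul_nonneg (Nat.cast_nonneg (α := ℝ) l)
              hlog2pos.le) (sub_nonneg.mpr hL1)]
          have h3 : |Real.log δ| * cs ≤ (cs + (l:ℝ) * cs * Real.log 2) * L := by
            calc |Real.log δ| * cs ≤ ((j:ℝ) * Real.log 2) * cs :=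
                mul_le_mul_of_nonneg_right habs hcs.le
              _ ≤ ((1 + (l:ℝ) * Real.log 2) * L) * cs :=
                mul_le_mul_of_nonneg_right key2 hcs.le
              _ = (cs + (l:ℝ) * cs * Real.log 2) * L := by ring
          calc |Real.log δ| * (cs / L) = (|Real.log δ| * cs) / L := by ring
            _ ≤ ((cs + (l:ℝ) * cs * Real.log 2) * L) / L := by gcongr
            _ = cs + (l:ℝ) * cs * Real.log 2 := by field_simp
      calc δ ^ (s y - s x) = Real.exp ((s y - s x) * Real.log δ) := by
            rw [Real.rpow_def_of_pos hδpos]; ring_nf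
        _ ≤ Real.exp (cs + (l:ℝ) * cs * Real.log 2) := by
            apply Real.exp_le_exp.mpr
            calc (s y - s x) * Real.log δ ≤ |(s y - s x) * Real.log δ| := le_abs_self _
              _ = |s y - s x| * |Real.log δ| := abs_mul _ _
              _ ≤ (cs / L) * |Real.log δ| := by
                  apply mul_le_mul_of_nonneg_right ht (abs_nonneg _)
              _ = |Real.log δ| * (cs / L) := by ring
              _ ≤ cs + (l:ℝ) * cs * Real.log 2 := hlogδ
        _ = Real.exp cs * Real.exp ((l:ℝ) * cs * Real.log 2) := by
            rw [← Real.exp_add]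
        _ = Real.exp cs * (2:ℝ) ^ ((l:ℝ) * cs) := by
            rw [Real.rpow_def_of_pos (by norm_num : (0:ℝ) < 2)]; ring_nf
  calc δ ^ s y = δ ^ (s y - s x) * δ ^ s x := by
        rw [← Real.rpow_add hδpos]; ring_nf
    _ ≤ Real.exp cs * (2:ℝ) ^ ((l:ℝ) * cs) * δ ^ s x := by
        apply mul_le_mul_of_nonneg_right key (Real.rpow_nonneg hδpos.le _)

end VarBesov
end
end

section
/- Let p : ℝⁿ → (0,∞) be a variable exponent that is globally log-Hölder continuous, and let δ ∈ (0,1). Then there exists a constant C > 0, independent of Q and E, such that for every cube Q ⊂ ℝⁿ with 0 < |Q| ≤ 1 and every measurable set E ⊂ Q with |E| ≥ δ|Q|, one has ‖1_Q‖_{L^{p(·)}} ≤ C ‖1_E‖_{L^{p(·)}}. -/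
/-!
On a cube `Q` of side `h` with `|Q| ≤ 1`, log-Hölder continuity pins `p` between two constants
`q ≤ q'` with `q' - q ≤ 2c / log (e + 1/(√n h))`. Testing the Luxemburg norm with
`λ = |S| ^ (1/q')`, resp. comparing the modular with `λ⁻¹ ^ q |S|`, gives
`‖1_Q‖ ≤ |Q| ^ (1/q')` and `|E| ^ (1/q) ≤ ‖1_E‖`. The loss
`|Q| ^ (1/q' - 1/q) = exp ((1/q - 1/q') log (1/|Q|))` is bounded because
`1/q - 1/q' ≤ (q' - q) / p₋²` and `log (1/h) ≲ log (e + 1/(√n h))`; finally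
`|Q| ^ (1/q) ≤ δ ^ (-1/p₋) |E| ^ (1/q)`.
-/

open MeasureTheory
open scoped ENNReal NNReal ComplexOrder

noncomputable section

namespace VarBesov

lemma measurableSet_cube {n : ℕ} (a : Rn n) (h : ℝ) : MeasurableSet (cube a h) := by
  have hcoord (i : Fin n) : Measurable fun x : Rn n => x i :=
    (continuous_apply i).measurable.comp (PiLp.continuous_ofLp 2 _).measurable
  have : cube a h = ⋂ i, ({x : Rn n | a i ≤ x i} ∩ {x | x i < a i + h}) := by
    ext x; simp [cube, Set.mem_iInter]
  rw [this]
  exact .iInter fun i =>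
    (measurableSet_le measurable_const (hcoord i)).inter (measurableSet_lt (hcoord i) measurable_const)

lemma volume_cube {n : ℕ} (a : Rn n) {h : ℝ} (hh : 0 ≤ h) :
    volume (cube a h) = ENNReal.ofReal (h ^ n) := by
  have : cube a h = (MeasurableEquiv.toLp 2 (Fin n → ℝ)).symm ⁻¹'
      (Set.univ.pi fun i => Set.Ico (a i) (a i + h)) := by
    ext x; simp [cube, Set.mem_pi]
  rw [this, (EuclideanSpace.volume_preserving_symm_measurableEquiv_toLp (Fin n)).measure_preimage
    (MeasurableSet.univ_pi fun i => measurableSet_Ico).nullMeasurableSet, volume_pi_pi]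
  simp [Real.volume_Ico, ENNReal.ofReal_pow hh]

lemma dist_le_sqrt_mul_of_mem_cube {n : ℕ} {a x : Rn n} {h : ℝ} (hh : 0 ≤ h) (hx : x ∈ cube a h) :
    dist x a ≤ Real.sqrt n * h := by
  have hcoord (i : Fin n) : dist (x i) (a i) ^ 2 ≤ h ^ 2 := by
    obtain ⟨h₁, h₂⟩ := hx i
    rw [Real.dist_eq, abs_of_nonneg (by linarith)]
    nlinarith
  calc dist x a = Real.sqrt (∑ i, dist (x i) (a i) ^ 2) := EuclideanSpace.dist_eq x a
    _ ≤ Real.sqrt (n * h ^ 2) := by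
        gcongr
        simpa using Finset.sum_le_sum fun i (_ : i ∈ Finset.univ) => hcoord i
    _ = Real.sqrt n * h := by rw [Real.sqrt_mul n.cast_nonneg, Real.sqrt_sq hh]

lemma one_le_log_exp_one_add {t : ℝ} (ht : 0 ≤ t) : 1 ≤ Real.log (Real.exp 1 + t) := by
  rw [Real.le_log_iff_exp_le (by positivity)]
  linarith

/-- The log-Hölder modulus `c / log (e + 1/t)` at `t = √n h`, the diameter of a cube of side `h`. -/
def lhModulus (n : ℕ) (c h : ℝ) : ℝ := c / Real.log (Real.exp 1 + 1 / (Real.sqrt n * h))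

lemma lhModulus_nonneg (n : ℕ) {c : ℝ} (hc : 0 ≤ c) {h : ℝ} (hh : 0 ≤ h) : 0 ≤ lhModulus n c h :=
  div_nonneg hc (zero_le_one.trans (one_le_log_exp_one_add (by positivity)))

lemma LocLH.abs_sub_le_lhModulus {n : ℕ} {c : ℝ} {r : Rn n → ℝ} (hr : LocLH c r) (hc : 0 ≤ c)
    {a x : Rn n} {h : ℝ} (hh : 0 ≤ h) (hx : x ∈ cube a h) : |r x - r a| ≤ lhModulus n c h := by
  rcases eq_or_ne x a with rfl | hxa
  · simpa using lhModulus_nonneg n hc hh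
  have hdist := dist_le_sqrt_mul_of_mem_cube hh hx
  refine (hr x a hxa).trans (div_le_div_of_nonneg_left hc ?_ ?_)
  · exact zero_lt_one.trans_le (one_le_log_exp_one_add (by positivity))
  · gcongr
    exact dist_pos.2 hxa

lemma LocLH.exists_exponents_pinching_on_cube {n : ℕ} {c : ℝ} {p : Rn n → ℝ} (hLH : LocLH c p)
    (hc : 0 ≤ c) {m : ℝ} (hpm : ∀ᵐ x ∂volume, m ≤ p x) (a : Rn n) {h : ℝ} (hh : 0 ≤ h) :
    ∃ q q', m ≤ q ∧ q ≤ q' ∧ q' ≤ q + 2 * lhModulus n c h ∧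
      (∀ x ∈ cube a h, p x ≤ q') ∧ ∀ᵐ x ∂volume, x ∈ cube a h → q ≤ p x := by
  set ω := lhModulus n c h
  have hosc (x) (hx : x ∈ cube a h) := abs_le.1 (hLH.abs_sub_le_lhModulus hc hh hx)
  have hω : 0 ≤ ω := lhModulus_nonneg n hc hh
  refine ⟨max m (p a - ω), max m (p a + ω), le_max_left _ _, max_le_max le_rfl (by linarith),
    max_le ?_ ?_, fun x hx => le_max_of_le_right (by linarith [hosc x hx]),
    hpm.mono fun x hx hxQ => max_le hx (by linarith [hosc x hxQ])⟩
  · linarith [le_max_left m (p a - ω)]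
  · linarith [le_max_right m (p a - ω)]

lemma neg_log_le_mul_log {n : ℕ} (hn : 1 ≤ n) {h : ℝ} (hh : 0 < h) :
    -Real.log h ≤ (1 + Real.log (Real.sqrt n)) * Real.log (Real.exp 1 + 1 / (Real.sqrt n * h)) := by
  set L := Real.log (Real.exp 1 + 1 / (Real.sqrt n * h))
  have hsn : 1 ≤ Real.sqrt n := Real.one_le_sqrt.2 (by exact_mod_cast hn)
  have hL : 1 ≤ L := one_le_log_exp_one_add (by positivity)
  have hinv : h⁻¹ ≤ Real.sqrt n * (Real.exp 1 + 1 / (Real.sqrt n * h)) := by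
    have : Real.sqrt n * (Real.exp 1 + 1 / (Real.sqrt n * h)) = Real.sqrt n * Real.exp 1 + h⁻¹ := by
      field_simp
    rw [this]
    linarith [mul_pos (zero_lt_one.trans_le hsn) (Real.exp_pos 1)]
  have hlog : -Real.log h ≤ Real.log (Real.sqrt n) + L := by
    rw [← Real.log_inv, ← Real.log_mul (by positivity) (by positivity)]
    exact Real.log_le_log (by positivity) hinv
  nlinarith [Real.log_nonneg hsn]

lemma lhModulus_mul_neg_log_le {n : ℕ} (hn : 1 ≤ n) {c h : ℝ} (hc : 0 ≤ c) (hh : 0 < h) :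
    lhModulus n c h * -Real.log h ≤ c * (1 + Real.log (Real.sqrt n)) := by
  have hlog := neg_log_le_mul_log hn hh
  rw [lhModulus]
  set L := Real.log (Real.exp 1 + 1 / (Real.sqrt n * h))
  have hL : 0 < L := zero_lt_one.trans_le (one_le_log_exp_one_add (by positivity))
  calc c / L * -Real.log h ≤ c / L * ((1 + Real.log (Real.sqrt n)) * L) := by gcongr
    _ = c * (1 + Real.log (Real.sqrt n)) := by field_simp

lemma ofReal_abs_indicator_one_div_rpow_of_mem {n : ℕ} {S : Set (Rn n)} {x : Rn n} (hx : x ∈ S)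
    (lam : ℝ≥0∞) (r : ℝ) :
    (ENNReal.ofReal |S.indicator (fun _ => (1 : ℝ)) x| / lam) ^ r = lam⁻¹ ^ r := by
  simp [hx]

lemma luxNorm_indicator_le_rpow {n : ℕ} {p : Rn n → ℝ} (hpos : ∀ x, 0 < p x) {S : Set (Rn n)}
    (hS : MeasurableSet S) (hS1 : volume S ≤ 1) {q : ℝ} (hq : 0 < q) (hpq : ∀ x ∈ S, p x ≤ q) :
    luxNorm p (S.indicator fun _ => 1) ≤ volume S ^ (1 / q) := by
  set lam := volume S ^ (1 / q)
  have hlam : 1 ≤ lam⁻¹ := ENNReal.one_le_inv.2 (ENNReal.rpow_le_one hS1 (by positivity))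
  refine sInf_le ?_
  calc ∫⁻ x, (ENNReal.ofReal |S.indicator (fun _ => (1 : ℝ)) x| / lam) ^ p x
      ≤ ∫⁻ x, S.indicator (fun _ => lam⁻¹ ^ q) x := by
        refine lintegral_mono fun x => ?_
        by_cases hx : x ∈ S
        · rw [ofReal_abs_indicator_one_div_rpow_of_mem hx, Set.indicator_of_mem hx]
          exact ENNReal.rpow_le_rpow_of_exponent_le hlam (hpq x hx)
        · simp [hx, ENNReal.zero_rpow_of_pos (hpos x)]
    _ = (volume S)⁻¹ * volume S := by
        rw [lintegral_indicator_const hS, ENNReal.inv_rpow, ← ENNReal.rpow_mul, one_div,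
          inv_mul_cancel₀ hq.ne', ENNReal.rpow_one]
    _ ≤ 1 := ENNReal.inv_mul_le_one _

lemma rpow_one_div_le_luxNorm_indicator {n : ℕ} {p : Rn n → ℝ} {S : Set (Rn n)}
    (hS : MeasurableSet S) (hS1 : volume S ≤ 1) {q : ℝ} (hq : 0 < q)
    (hqp : ∀ᵐ x ∂volume, x ∈ S → q ≤ p x) :
    volume S ^ (1 / q) ≤ luxNorm p (S.indicator fun _ => 1) := by
  refine le_sInf fun lam hmod => ?_
  rcases le_total 1 lam with hlam | hlam
  · exact (ENNReal.rpow_le_one hS1 (by positivity)).trans hlam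
  have hinv : 1 ≤ lam⁻¹ := ENNReal.one_le_inv.2 hlam
  have hmass : volume S * lam⁻¹ ^ q ≤ 1 :=
    calc volume S * lam⁻¹ ^ q = ∫⁻ x, S.indicator (fun _ => lam⁻¹ ^ q) x := by
          rw [lintegral_indicator_const hS, mul_comm]
      _ ≤ ∫⁻ x, (ENNReal.ofReal |S.indicator (fun _ => (1 : ℝ)) x| / lam) ^ p x := by
          refine lintegral_mono_ae (hqp.mono fun x hx => ?_)
          by_cases hxS : x ∈ S
          · rw [ofReal_abs_indicator_one_div_rpow_of_mem hxS, Set.indicator_of_mem hxS]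
            exact ENNReal.rpow_le_rpow_of_exponent_le hinv (hx hxS)
          · simp [hxS]
      _ ≤ 1 := hmod
  have hSlam : volume S ≤ lam ^ q := by
    rwa [← inv_inv (lam ^ q), ← ENNReal.inv_rpow, ENNReal.le_inv_iff_mul_le]
  calc volume S ^ (1 / q) ≤ (lam ^ q) ^ (1 / q) := by gcongr
    _ = lam := by rw [one_div, ENNReal.rpow_rpow_inv hq.ne']

lemma rpow_one_div_le_exp_mul_rpow_one_div {A q q' K : ℝ} (hA : 0 < A)
    (hK : (1 / q - 1 / q') * -Real.log A ≤ K) : A ^ (1 / q') ≤ Real.exp K * A ^ (1 / q) := by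
  rw [Real.rpow_def_of_pos hA, Real.rpow_def_of_pos hA, ← Real.exp_add]
  exact Real.exp_le_exp.2 (by linarith)

lemma one_div_sub_one_div_le {m q q' ω : ℝ} (hm : 0 < m) (hmq : m ≤ q) (hqq' : q ≤ q')
    (hq'q : q' ≤ q + ω) : 1 / q - 1 / q' ≤ ω / m ^ 2 := by
  have hq : 0 < q := hm.trans_le hmq
  rw [div_sub_div _ _ hq.ne' (hq.trans_le hqq').ne', one_mul, mul_one]
  gcongr
  · linarith
  · linarith
  · nlinarith

lemma pow_rpow_one_div_le_exp_mul {n : ℕ} (hn : 1 ≤ n) {c h m q q' : ℝ} (hc : 0 ≤ c)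
    (hh : 0 < h) (hh1 : h ^ n ≤ 1) (hm : 0 < m) (hmq : m ≤ q) (hqq' : q ≤ q')
    (hq'q : q' ≤ q + 2 * lhModulus n c h) :
    (h ^ n) ^ (1 / q') ≤
      Real.exp (2 * n * c * (1 + Real.log (Real.sqrt n)) / m ^ 2) * (h ^ n) ^ (1 / q) := by
  refine rpow_one_div_le_exp_mul_rpow_one_div (by positivity) ?_
  have hlog : 0 ≤ -Real.log (h ^ n) := neg_nonneg.2 (Real.log_nonpos (by positivity) hh1)
  calc (1 / q - 1 / q') * -Real.log (h ^ n)
      ≤ 2 * lhModulus n c h / m ^ 2 * -Real.log (h ^ n) := by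
        gcongr
        exact one_div_sub_one_div_le hm hmq hqq' hq'q
    _ = 2 * n / m ^ 2 * (lhModulus n c h * -Real.log h) := by
        rw [Real.log_pow]
        ring
    _ ≤ 2 * n / m ^ 2 * (c * (1 + Real.log (Real.sqrt n))) :=
        mul_le_mul_of_nonneg_left (lhModulus_mul_neg_log_le hn hc hh) (by positivity)
    _ = 2 * n * c * (1 + Real.log (Real.sqrt n)) / m ^ 2 := by ring

lemma rpow_one_div_le_of_mul_le {δ m q A B : ℝ} (hδ0 : 0 < δ) (hδ1 : δ ≤ 1) (hm : 0 < m)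
    (hmq : m ≤ q) (hA : 0 ≤ A) (hAB : δ * A ≤ B) : A ^ (1 / q) ≤ δ ^ (-(1 / m)) * B ^ (1 / q) := by
  have hq : 0 < q := hm.trans_le hmq
  calc A ^ (1 / q) = δ ^ (-(1 / q)) * (δ * A) ^ (1 / q) := by
        rw [Real.mul_rpow hδ0.le hA, ← mul_assoc, ← Real.rpow_add hδ0, neg_add_cancel,
          Real.rpow_zero, one_mul]
    _ ≤ δ ^ (-(1 / m)) * B ^ (1 / q) :=
        mul_le_mul (Real.rpow_le_rpow_of_exponent_ge hδ0 hδ1 (neg_le_neg (by gcongr)))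
          (by gcongr) (by positivity) (by positivity)

theorem statement2 {n : ℕ} (hn : 1 ≤ n) (p : Rn n → ℝ) (hp : IsVarExp p) (hpLH : GlobLH p)
    (δ : ℝ) (hδ0 : 0 < δ) (hδ1 : δ < 1) :
    ∃ C > 0, ∀ (a : Rn n) (h : ℝ), 0 < h → volume (cube a h) ≤ 1 →
      ∀ E : Set (Rn n), MeasurableSet E → E ⊆ cube a h →
        δ * (volume (cube a h)).toReal ≤ (volume E).toReal →
        luxNorm p ((cube a h).indicator fun _ => 1) ≤
          ENNReal.ofReal C * luxNorm p (E.indicator fun _ => 1) := by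
  obtain ⟨-, hpos, hm, -⟩ := hp
  obtain ⟨⟨c, hc, hLH⟩, -⟩ := hpLH
  set m := essInf p volume
  have hpm : ∀ᵐ x ∂volume, m ≤ p x :=
    ae_essInf_le (Filter.isBoundedUnder_of ⟨0, fun x => (hpos x).le⟩)
  set C := Real.exp (2 * n * c * (1 + Real.log (Real.sqrt n)) / m ^ 2) * δ ^ (-(1 / m))
  refine ⟨C, by positivity, fun a h hh hQ1 E hE hEQ hδE => ?_⟩
  obtain ⟨q, q', hmq, hqq', hq'q, hpq', hqp⟩ := hLH.exists_exponents_pinching_on_cube hc.le hpm a hh.le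
  have hQ : volume (cube a h) = ENNReal.ofReal (h ^ n) := volume_cube a hh.le
  rw [hQ, ENNReal.toReal_ofReal (by positivity)] at hδE
  have hEfin : volume E ≠ ⊤ := ne_top_of_le_ne_top (hQ ▸ ENNReal.ofReal_ne_top) (measure_mono hEQ)
  have hvol : (h ^ n) ^ (1 / q') ≤ C * (volume E).toReal ^ (1 / q) :=
    calc (h ^ n) ^ (1 / q') ≤ Real.exp _ * (h ^ n) ^ (1 / q) :=
          pow_rpow_one_div_le_exp_mul hn hc.le hh (by simpa [hQ] using hQ1) hm hmq hqq' hq'q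
      _ ≤ _ * (δ ^ (-(1 / m)) * (volume E).toReal ^ (1 / q)) := by
          gcongr
          exact rpow_one_div_le_of_mul_le hδ0 hδ1.le hm hmq (by positivity) hδE
      _ = C * (volume E).toReal ^ (1 / q) := by ring
  have hq : 0 < q := hm.trans_le hmq
  calc luxNorm p ((cube a h).indicator fun _ => 1) ≤ volume (cube a h) ^ (1 / q') :=
        luxNorm_indicator_le_rpow hpos (measurableSet_cube a h) hQ1 (hq.trans_le hqq') hpq'
    _ ≤ ENNReal.ofReal C * volume E ^ (1 / q) := by
        rw [hQ, ENNReal.ofReal_rpow_of_pos (by positivity), ← ENNReal.ofReal_toReal hEfin,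
          ENNReal.ofReal_rpow_of_nonneg ENNReal.toReal_nonneg (by positivity),
          ← ENNReal.ofReal_mul (by positivity)]
        exact ENNReal.ofReal_le_ofReal hvol
    _ ≤ ENNReal.ofReal C * luxNorm p (E.indicator fun _ => 1) := by
        gcongr
        exact rpow_one_div_le_luxNorm_indicator hE ((measure_mono hEQ).trans hQ1) hq
          (hqp.mono fun x hx hxE => hx (hEQ hxE))

end VarBesov
end
end

section
/- Let p : ℝⁿ → (0,∞) be a variable exponent that is globally log-Hölder continuous. For a measurable set A ⊂ ℝⁿ with 0 < |A| < ∞ define 1/p_A := (1/|A|) ∫_A (1/p(x)) dx. Then there exists a constant C > 0 such that for every cube Q with 0 < |Q| ≤ 1 and every measurable set E ⊂ Q with |E| > 0, one has |Q|^{1/p_Q − 1/p_E} ≤ C. -/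
open MeasureTheory
open scoped ENNReal NNReal ComplexOrder

noncomputable section

namespace VarBesov

/-!
Log-Hölder continuity makes `p` continuous, so `p ≥ p_− > 0` everywhere and `1/p` is again
locally log-Hölder, with constant `c' = c / p_−²`. Each of the averages `1/p_Q` and `1/p_E` is
bounded by a value of `1/p` at some point of `Q`, so `1/p_Q − 1/p_E ≥ −c' / log(e + 1/d)`, where
`d = ℓ√n` is the diameter of a cube of side `ℓ`. Since `log(1/ℓ) ≤ log √n + log(e + 1/d)`,
the power `|Q|^{−c'/log(e + 1/d)} = exp(n c' log(1/ℓ) / log(e + 1/d))` stays bounded.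
-/

lemma cube_eq_preimage {n : ℕ} (a : Rn n) (h : ℝ) :
    cube a h = (MeasurableEquiv.toLp 2 (Fin n → ℝ)).symm ⁻¹'
      Set.univ.pi fun i => Set.Ico (a i) (a i + h) := by
  ext x
  simp [cube, Set.mem_pi, MeasurableEquiv.coe_toLp_symm]

lemma dist_le_of_mem_cube {n : ℕ} {a : Rn n} {h : ℝ} (hh : 0 ≤ h) {x y : Rn n}
    (hx : x ∈ cube a h) (hy : y ∈ cube a h) : dist x y ≤ h * √n := by
  have hcoord : ∀ i, dist (x i) (y i) ^ 2 ≤ h ^ 2 := fun i => by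
    rw [Real.dist_eq, sq_abs]
    nlinarith [hx i, hy i]
  calc dist x y = √(∑ i, dist (x i) (y i) ^ 2) := EuclideanSpace.dist_eq x y
    _ ≤ √(∑ _i : Fin n, h ^ 2) := Real.sqrt_le_sqrt (Finset.sum_le_sum fun i _ => hcoord i)
    _ = h * √n := by
      rw [Finset.sum_const, Finset.card_univ, Fintype.card_fin, nsmul_eq_mul,
        Real.sqrt_mul (Nat.cast_nonneg n), Real.sqrt_sq hh, mul_comm]

lemma essInf_le_of_continuous {X : Type*} [TopologicalSpace X] [MeasurableSpace X]
    {μ : Measure X} [μ.IsOpenPosMeasure] {f : X → ℝ} (hf : Continuous f)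
    (hbdd : Filter.IsBoundedUnder (· ≥ ·) (ae μ) f) (x : X) : essInf f μ ≤ f x :=
  (isClosed_le continuous_const hf).closure_subset (Measure.dense_of_ae (ae_essInf_le hbdd) x)

lemma integrableOn_one_div_of_le {α : Type*} [MeasurableSpace α] {μ : Measure α}
    {r : α → ℝ} {s : Set α} {b : ℝ} (hr : Measurable r) (hb : 0 < b) (hrb : ∀ x, b ≤ r x)
    (hs : μ s ≠ ∞) : IntegrableOn (fun x => 1 / r x) s μ :=
  .of_bound hs.lt_top (measurable_const.div hr).aestronglyMeasurable (1 / b)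
    (ae_of_all _ fun x => by
      rw [Real.norm_of_nonneg (one_div_nonneg.mpr (hb.trans_le (hrb x)).le)]
      exact one_div_le_one_div_of_le hb (hrb x))

lemma setAverage_sub_setAverage_le {α : Type*} [MeasurableSpace α] {μ : Measure α}
    {f : α → ℝ} {s t : Set α} {ω : ℝ} (hs : μ s ≠ 0) (hs' : μ s ≠ ∞) (ht : μ t ≠ 0)
    (ht' : μ t ≠ ∞) (hfs : IntegrableOn f s μ) (hft : IntegrableOn f t μ)
    (hosc : ∀ x ∈ s, ∀ y ∈ t, f y - f x ≤ ω) :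
    ⨍ y in t, f y ∂μ - ⨍ x in s, f x ∂μ ≤ ω := by
  obtain ⟨x, hx, hxs⟩ := exists_le_setAverage hs hs' hfs
  obtain ⟨y, hy, hyt⟩ := exists_setAverage_le ht ht' hft
  linarith [hosc x hx y hy]

namespace LocLH

variable {n : ℕ} {c : ℝ} {r : Rn n → ℝ}

lemma continuous (hr : LocLH c r) : Continuous r := by
  refine Metric.continuous_iff.mpr fun x ε hε => ⟨Real.exp (-(c / ε)), Real.exp_pos _, ?_⟩
  intro y hy
  rcases eq_or_ne y x with rfl | hne
  · simpa using hε
  have hd : 0 < dist y x := dist_pos.mpr hne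
  have hinv : Real.exp (c / ε) < 1 / dist y x := by
    rw [lt_one_div (Real.exp_pos _) hd, one_div, ← Real.exp_neg]
    exact hy
  have hlog : c / ε < Real.log (Real.exp 1 + 1 / dist y x) := by
    rw [Real.lt_log_iff_exp_lt (by positivity)]
    linarith [Real.exp_pos 1]
  have hlog0 : 0 < Real.log (Real.exp 1 + 1 / dist y x) :=
    Real.log_pos (by linarith [Real.add_one_lt_exp one_ne_zero, one_div_nonneg.mpr hd.le])
  rw [Real.dist_eq]
  calc |r y - r x| ≤ c / Real.log (Real.exp 1 + 1 / dist y x) := hr y x hne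
    _ < ε := by
      rw [div_lt_iff₀ hlog0]
      rw [div_lt_iff₀ hε] at hlog
      linarith

lemma le_of_dist_le (hr : LocLH c r) (hc : 0 ≤ c) {x y : Rn n} {d : ℝ} (hxy : dist x y ≤ d) :
    |r x - r y| ≤ c / Real.log (Real.exp 1 + 1 / d) := by
  have hd : 0 ≤ d := dist_nonneg.trans hxy
  have hlog : 0 < Real.log (Real.exp 1 + 1 / d) :=
    Real.log_pos (by linarith [Real.add_one_lt_exp one_ne_zero, one_div_nonneg.mpr hd])
  rcases eq_or_ne x y with rfl | hne
  · simpa using div_nonneg hc hlog.le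
  have hxy0 : 0 < dist x y := dist_pos.mpr hne
  refine (hr x y hne).trans (div_le_div_of_nonneg_left hc hlog ?_)
  gcongr

lemma one_div (hr : LocLH c r) {b : ℝ} (hb : 0 < b) (hrb : ∀ x, b ≤ r x) :
    LocLH (c / b ^ 2) fun x => 1 / r x := by
  intro x y hne
  have hx : 0 < r x := hb.trans_le (hrb x)
  have hy : 0 < r y := hb.trans_le (hrb y)
  have hxy : 0 < r x * r y := mul_pos hx hy
  have hprod : b ^ 2 ≤ r x * r y := by nlinarith [hrb x, hrb y]
  have hdiff : 1 / r x - 1 / r y = (r y - r x) / (r x * r y) := by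
    field_simp
  rw [hdiff, abs_div, abs_of_pos hxy, abs_sub_comm, div_right_comm]
  exact div_le_div₀ ((abs_nonneg _).trans (hr x y hne)) (hr x y hne) (by positivity) hprod

end LocLH

lemma pow_rpow_neg_div_log_le {h K : ℝ} (hh : 0 < h) (hK : 0 ≤ K) (n : ℕ) :
    (h ^ n) ^ (-(K / Real.log (Real.exp 1 + 1 / (h * √n)))) ≤
      Real.exp (n * K * (Real.log √n + 1)) := by
  rcases Nat.eq_zero_or_pos n with rfl | hn
  · simp
  set L := Real.log (Real.exp 1 + 1 / (h * √n))
  have hs : 1 ≤ √n := Real.one_le_sqrt.mpr (by exact_mod_cast hn)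
  have hL : 1 ≤ L := by
    rw [Real.le_log_iff_exp_le (by positivity)]
    linarith [one_div_nonneg.mpr (by positivity : 0 ≤ h * √n)]
  have hlog_inv : -Real.log h ≤ Real.log √n + L := by
    have hsplit : -Real.log h = Real.log √n + Real.log (1 / (h * √n)) := by
      rw [← Real.log_mul (by positivity) (by positivity), ← Real.log_inv]
      congr 1
      field_simp
    rw [hsplit]
    gcongr
    exact Real.log_le_log (by positivity) (by linarith [Real.exp_pos 1])
  have hlogs : Real.log √n / L ≤ Real.log √n :=
    div_le_self (Real.log_nonneg hs) hL
  rw [Real.rpow_def_of_pos (by positivity), Real.log_pow]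
  refine Real.exp_le_exp.mpr ?_
  calc n * Real.log h * -(K / L) = n * K * (-Real.log h / L) := by ring
    _ ≤ n * K * ((Real.log √n + L) / L) := by gcongr
    _ = n * K * (Real.log √n / L + 1) := by rw [add_div, div_self (by positivity)]
    _ ≤ n * K * (Real.log √n + 1) := by gcongr

theorem statement3_general {n : ℕ} (p : Rn n → ℝ) (hp : IsVarExp p) (hpLH : GlobLH p) :
    ∃ C > 0, ∀ (a : Rn n) (h : ℝ), 0 < h → volume (cube a h) ≤ 1 →
      ∀ E : Set (Rn n), MeasurableSet E → E ⊆ cube a h → 0 < volume E →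
        ((volume (cube a h)).toReal) ^
            (((volume (cube a h)).toReal⁻¹ * ∫ x in cube a h, 1 / p x) -
              ((volume E).toReal⁻¹ * ∫ x in E, 1 / p x)) ≤ C := by
  obtain ⟨⟨c, hc, hLH⟩, -⟩ := hpLH
  obtain ⟨hpm, hp0, hb, -⟩ := hp
  set b := essInf p volume
  have hpb : ∀ x, b ≤ p x := essInf_le_of_continuous hLH.continuous
    (Filter.isBoundedUnder_of ⟨0, fun x => (hp0 x).le⟩)
  set K := c / b ^ 2
  have hK : 0 ≤ K := by positivity
  refine ⟨Real.exp (n * K * (Real.log √n + 1)), Real.exp_pos _, ?_⟩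
  intro a h hh hQ1 E _ hEQ hE0
  have hQ := volume_cube a hh.le
  have hQ0 : 0 < (volume (cube a h)).toReal := by
    rw [hQ, ENNReal.toReal_ofReal (by positivity)]; positivity
  have hQtop : volume (cube a h) ≠ ∞ := ne_top_of_le_ne_top ENNReal.one_ne_top hQ1
  have hint := integrableOn_one_div_of_le hpm hb hpb hQtop
  have hosc : ∀ x ∈ cube a h, ∀ y ∈ E, 1 / p y - 1 / p x ≤
      K / Real.log (Real.exp 1 + 1 / (h * √n)) := fun x hx y hy =>
    (le_abs_self _).trans <|
      (hLH.one_div hb hpb).le_of_dist_le hK (dist_le_of_mem_cube hh.le (hEQ hy) hx)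
  have hdiff := setAverage_sub_setAverage_le (ENNReal.toReal_pos_iff.mp hQ0).1.ne' hQtop
    hE0.ne' (measure_ne_top_of_subset hEQ hQtop) hint (hint.mono_set hEQ) hosc
  simp only [setAverage_eq, measureReal_def, smul_eq_mul] at hdiff
  calc _ ≤ (volume (cube a h)).toReal ^ (-(K / Real.log (Real.exp 1 + 1 / (h * √n)))) :=
        Real.rpow_le_rpow_of_exponent_ge hQ0 (ENNReal.toReal_le_of_le_ofReal zero_le_one
          (by simpa using hQ1)) (by linarith)
    _ ≤ _ := by
      rw [hQ, ENNReal.toReal_ofReal (by positivity)]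
      exact pow_rpow_neg_div_log_le hh hK n

theorem statement3 {n : ℕ} (hn : 1 ≤ n) (p : Rn n → ℝ) (hp : IsVarExp p) (hpLH : GlobLH p) :
    ∃ C > 0, ∀ (a : Rn n) (h : ℝ), 0 < h → volume (cube a h) ≤ 1 →
      ∀ E : Set (Rn n), MeasurableSet E → E ⊆ cube a h → 0 < volume E →
        ((volume (cube a h)).toReal) ^
            (((volume (cube a h)).toReal⁻¹ * ∫ x in cube a h, 1 / p x) -
              ((volume E).toReal⁻¹ * ∫ x in E, 1 / p x)) ≤ C :=
  statement3_general p hp hpLH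

end VarBesov
end
end
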